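/- If f : X → Y and f' : X' → Y' are continuous maps and Y × Y' is a normal topological space, then genus(f × f') ≤ genus(f) + genus(f'), where genus denotes the (normalized) Schwarz genus. -/

import Mathlib

/-!
Take open covers `U₀, …, Uₙ` of `Y` and `V₀, …, Vₘ` of `Y'` carrying local homotopy sections of
`f` and `f'`, and partitions of unity `uᵢ`, `vⱼ` on the normal space `Y × Y'` subordinate to the
pulled-back covers. Let `Ω(i, j)` be the set where `uᵢ vⱼ > 0` and `uᵢ vⱼ > uₐ v_b` for every
`(a, b)` not below `(i, j)` in the product order. Taking for `i` and `j` the last maximisers of `u`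
and `v` at a point shows that the `Ω(i, j)` cover, and two of them are disjoint when their indices
are incomparable, in particular when `i + j = a + b` and `(i, j) ≠ (a, b)`. So the product
sections over the `Uᵢ × Vⱼ` glue over each `W_k = ⋃_{i+j=k} Ω(i, j)`, and the `n + m + 1` sets
`W_k` cover `Y × Y'`.
-/

noncomputable section


/-- The space of "multipaths": `n` paths in `X` with a common initial point.  This is the
space `X^{J_n}` of continuous maps from the wedge `J_n` of `n` unit intervals to `X`. -/
abbrev MultiPath (n : ℕ) (X : Type*) [TopologicalSpace X] :=
  {f : Fin n → C(unitInterval, X) // ∀ i j : Fin n, f i 0 = f j 0}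

/-- The endpoint-evaluation fibration `e_n : X^{J_n} → X^n`. -/
def endpointsMap (n : ℕ) (X : Type*) [TopologicalSpace X] :
    C(MultiPath n X, Fin n → X) :=
  ⟨fun f i => f.1 i 1, by
    apply continuous_pi
    intro i
    exact (continuous_eval_const (1 : unitInterval) :
        Continuous fun g : C(unitInterval, X) => g 1).comp
      ((continuous_apply i).comp continuous_subtype_val)⟩

/-- The diagonal map `d_n : X → X^n`. -/
def diagMap (n : ℕ) (X : Type*) [TopologicalSpace X] : C(X, Fin n → X) :=
  ⟨fun x _ => x, continuous_pi fun _ => continuous_id⟩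

/-- `secatLE p k` : the base of `p` can be covered by `k+1` open sets, each admitting a
continuous (strict) local section of `p`. -/
def secatLE {E B : Type*} [TopologicalSpace E] [TopologicalSpace B]
    (p : C(E, B)) (k : ℕ) : Prop :=
  ∃ U : Fin (k + 1) → Set B, (∀ i, IsOpen (U i)) ∧ (⋃ i, U i) = Set.univ ∧
    ∀ i, ∃ s : C(U i, E), ∀ x : U i, p (s x) = (x : B)

/-- The (normalized) sectional category / Schwarz genus of a fibration, via strict local
sections. -/
def secat {E B : Type*} [TopologicalSpace E] [TopologicalSpace B] (p : C(E, B)) : ℕ∞ :=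
  sInf ((fun k : ℕ => (k : ℕ∞)) '' {k | secatLE p k})

/-- `genusLE f k` : the target of `f` can be covered by `k+1` open sets, each admitting a
continuous local homotopy section of `f` (this computes the Schwarz genus of an arbitrary
map, i.e. of its fibrational substitute). -/
def genusLE {E B : Type*} [TopologicalSpace E] [TopologicalSpace B]
    (f : C(E, B)) (k : ℕ) : Prop :=
  ∃ U : Fin (k + 1) → Set B, (∀ i, IsOpen (U i)) ∧ (⋃ i, U i) = Set.univ ∧
    ∀ i, ∃ s : C(U i, E), ContinuousMap.Homotopic (f.comp s)
      ⟨fun x : U i => (x : B), continuous_subtype_val⟩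

/-- The (normalized) Schwarz genus of an arbitrary continuous map, defined via local
homotopy sections (equivalently, via a fibrational substitute). -/
def schwarzGenus {E B : Type*} [TopologicalSpace E] [TopologicalSpace B] (f : C(E, B)) : ℕ∞ :=
  sInf ((fun k : ℕ => (k : ℕ∞)) '' {k | genusLE f k})

/-- The `n`-th (normalized) topological complexity: the Schwarz genus of the endpoint
evaluation fibration `e_n : X^{J_n} → X^n`. -/
def TCn (n : ℕ) (X : Type*) [TopologicalSpace X] : ℕ∞ := secat (endpointsMap n X)

/-- `catLE Y k` : `Y` is covered by `k+1` open sets, each contractible in `Y`. -/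
def catLE (Y : Type*) [TopologicalSpace Y] (k : ℕ) : Prop :=
  ∃ U : Fin (k + 1) → Set Y, (∀ i, IsOpen (U i)) ∧ (⋃ i, U i) = Set.univ ∧
    ∀ i, ∃ y : Y, ContinuousMap.Homotopic
      ⟨fun x : U i => (x : Y), continuous_subtype_val⟩ (ContinuousMap.const _ y)

/-- The normalized Lusternik–Schnirelmann category. -/
def LScat (Y : Type*) [TopologicalSpace Y] : ℕ∞ :=
  sInf ((fun k : ℕ => (k : ℕ∞)) '' {k | catLE Y k})

open Set Function Topology

namespace ContinuousMap

variable {X Y ι : Type*} [TopologicalSpace X] [TopologicalSpace Y] {S : ι → Set X}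

theorem exists_restrict_eq_of_pairwise_disjoint (hSo : ∀ i, IsOpen (S i))
    (hSd : Pairwise (Disjoint on S)) (hSc : ⋃ i, S i = univ) (φ : ∀ i, C(S i, Y)) :
    ∃ g : C(X, Y), ∀ i, g.restrict (S i) = φ i := by
  refine ⟨liftCover S φ ?_ ?_, fun i => liftCover_restrict⟩
  · intro i j x hxi hxj
    obtain rfl := hSd.eq (not_disjoint_iff.2 ⟨x, hxi, hxj⟩)
    rfl
  · intro x
    obtain ⟨i, hi⟩ := mem_iUnion.1 (hSc ▸ mem_univ x)
    exact ⟨i, (hSo i).mem_nhds hi⟩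

theorem Homotopic.of_restrict {g₀ g₁ : C(X, Y)} (hSo : ∀ i, IsOpen (S i))
    (hSd : Pairwise (Disjoint on S)) (hSc : ⋃ i, S i = univ)
    (h : ∀ i, (g₀.restrict (S i)).Homotopic (g₁.restrict (S i))) : g₀.Homotopic g₁ := by
  have F := fun i => (h i).some
  obtain ⟨H, hH⟩ := exists_restrict_eq_of_pairwise_disjoint
    (S := fun i => (Prod.snd ⁻¹' S i : Set (unitInterval × X)))
    (fun i => (hSo i).preimage continuous_snd) (fun i j hij => (hSd hij).preimage _)
    (by rw [← preimage_iUnion, hSc, preimage_univ])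
    (fun i => (F i).toContinuousMap.comp ⟨fun p => (p.1.1, ⟨p.1.2, p.2⟩), by fun_prop⟩)
  have hHF : ∀ t x i (hx : x ∈ S i), H (t, x) = F i (t, ⟨x, hx⟩) := fun t x i hx =>
    congr($(hH i) ⟨(t, x), hx⟩)
  refine ⟨⟨H, fun x => ?_, fun x => ?_⟩⟩ <;>
  · obtain ⟨i, hi⟩ := mem_iUnion.1 (hSc ▸ mem_univ x)
    simp [hHF _ x i hi]

end ContinuousMap

def HasHomotopySectionOn {E B : Type*} [TopologicalSpace E] [TopologicalSpace B]
    (f : C(E, B)) (U : Set B) : Prop :=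
  ∃ s : C(U, E), ContinuousMap.Homotopic (f.comp s)
    ⟨fun x : U => (x : B), continuous_subtype_val⟩

namespace HasHomotopySectionOn

variable {E B E' B' : Type*} [TopologicalSpace E] [TopologicalSpace B] [TopologicalSpace E']
  [TopologicalSpace B'] {f : C(E, B)} {f' : C(E', B')} {U V : Set B}

theorem mono (h : HasHomotopySectionOn f V) (hUV : U ⊆ V) : HasHomotopySectionOn f U := by
  obtain ⟨s, hs⟩ := h
  exact ⟨s.comp (ContinuousMap.inclusion hUV), hs.comp (.refl _)⟩

theorem prodMap {V' : Set B'} (h : HasHomotopySectionOn f U) (h' : HasHomotopySectionOn f' V') :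
    HasHomotopySectionOn (f.prodMap f') (U ×ˢ V') := by
  obtain ⟨s, hs⟩ := h
  obtain ⟨t, ht⟩ := h'
  let e : C(↥(U ×ˢ V'), U × V') := Homeomorph.Set.prod U V'
  exact ⟨(s.prodMap t).comp e, (hs.prodMap ht).comp (.refl e)⟩

theorem iUnion {ι : Type*} {Ω : ι → Set B} (hΩo : ∀ i, IsOpen (Ω i))
    (hΩd : Pairwise (Disjoint on Ω)) (h : ∀ i, HasHomotopySectionOn f (Ω i)) :
    HasHomotopySectionOn f (⋃ i, Ω i) := by
  choose s hs using h
  let S : ι → Set (⋃ i, Ω i) := fun i => Subtype.val ⁻¹' Ω i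
  let incl : ∀ i, C(S i, Ω i) := fun i => ⟨fun x => ⟨x.1.1, x.2⟩, by fun_prop⟩
  have hSo : ∀ i, IsOpen (S i) := fun i => (hΩo i).preimage continuous_subtype_val
  have hSd : Pairwise (Disjoint on S) := fun i j hij => (hΩd hij).preimage _
  have hSc : ⋃ i, S i = univ := by
    rw [← preimage_iUnion, Subtype.coe_preimage_self]
  obtain ⟨σ, hσ⟩ := ContinuousMap.exists_restrict_eq_of_pairwise_disjoint hSo hSd hSc
    fun i => (s i).comp (incl i)
  refine ⟨σ, ContinuousMap.Homotopic.of_restrict hSo hSd hSc fun i => ?_⟩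
  have hrestrict : (f.comp σ).restrict (S i) = (f.comp (s i)).comp (incl i) := by
    change f.comp (σ.restrict (S i)) = _
    rw [hσ i]
    rfl
  rw [hrestrict]
  exact (hs i).comp (.refl _)

end HasHomotopySectionOn

theorem Finite.exists_last_max {ι β : Type*} [Finite ι] [Nonempty ι] [LinearOrder ι]
    [LinearOrder β] (w : ι → β) : ∃ i, ∀ a, w a ≤ w i ∧ (i < a → w a < w i) := by
  obtain ⟨i, hi⟩ := Finite.exists_max fun a => toLex (w a, a)
  refine ⟨i, fun a => ⟨?_, fun hia => ?_⟩⟩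
  · exact (Prod.Lex.toLex_le_toLex.1 (hi a)).elim le_of_lt fun h => h.1.le
  · rcases Prod.Lex.toLex_le_toLex.1 (hi a) with h | ⟨h, hai⟩
    · exact h
    · exact absurd hai hia.not_ge

theorem exists_mul_max_of_not_le {ι κ R : Type*} [Finite ι] [LinearOrder ι] [Finite κ]
    [LinearOrder κ] [Semiring R] [LinearOrder R] [IsStrictOrderedRing R] {u : ι → R}
    {v : κ → R} (hu : ∀ i, 0 ≤ u i) (hv : ∀ j, 0 ≤ v j) (hu' : ∃ i, 0 < u i)
    (hv' : ∃ j, 0 < v j) :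
    ∃ p : ι × κ, 0 < u p.1 * v p.2 ∧ ∀ q, ¬q ≤ p → u q.1 * v q.2 < u p.1 * v p.2 := by
  obtain ⟨i₀, hi₀⟩ := hu'
  obtain ⟨j₀, hj₀⟩ := hv'
  have : Nonempty ι := ⟨i₀⟩
  have : Nonempty κ := ⟨j₀⟩
  obtain ⟨i, hi⟩ := Finite.exists_last_max u
  obtain ⟨j, hj⟩ := Finite.exists_last_max v
  have hui : 0 < u i := hi₀.trans_le (hi i₀).1
  have hvj : 0 < v j := hj₀.trans_le (hj j₀).1
  refine ⟨(i, j), mul_pos hui hvj, fun ⟨a, b⟩ hq => ?_⟩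
  rcases not_and_or.1 (Prod.mk_le_mk.not.1 hq) with ha | hb
  · calc u a * v b ≤ u a * v j := mul_le_mul_of_nonneg_left (hj b).1 (hu a)
      _ < u i * v j := mul_lt_mul_of_pos_right ((hi a).2 (not_le.1 ha)) hvj
  · calc u a * v b ≤ u i * v b := mul_le_mul_of_nonneg_right (hi a).1 (hv b)
      _ < u i * v j := mul_lt_mul_of_pos_left ((hj b).2 (not_le.1 hb)) hui

theorem exists_inter_refinement_disjoint_of_incomparable {Z ι κ : Type*} [TopologicalSpace Z]
    [NormalSpace Z] [Finite ι] [LinearOrder ι] [Finite κ] [LinearOrder κ] {A : ι → Set Z}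
    {B : κ → Set Z} (hAo : ∀ i, IsOpen (A i)) (hAc : ⋃ i, A i = univ) (hBo : ∀ j, IsOpen (B j))
    (hBc : ⋃ j, B j = univ) :
    ∃ Ω : ι × κ → Set Z, (∀ p, IsOpen (Ω p)) ∧ (∀ p, Ω p ⊆ A p.1 ∩ B p.2) ∧ ⋃ p, Ω p = univ ∧
      ∀ p q, ¬p ≤ q → ¬q ≤ p → Disjoint (Ω p) (Ω q) := by
  obtain ⟨u, hu⟩ := PartitionOfUnity.exists_isSubordinate_of_locallyFinite isClosed_univ A hAo
    (locallyFinite_of_finite A) hAc.ge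
  obtain ⟨v, hv⟩ := PartitionOfUnity.exists_isSubordinate_of_locallyFinite isClosed_univ B hBo
    (locallyFinite_of_finite B) hBc.ge
  let w : ι × κ → Z → ℝ := fun p z => u p.1 z * v p.2 z
  have hw : ∀ p, Continuous (w p) := fun p => (u p.1).continuous.mul (v p.2).continuous
  refine ⟨fun p => {z | 0 < w p z ∧ ∀ q, ¬q ≤ p → w q z < w p z}, fun p => ?_, fun p z hz => ?_,
    eq_univ_of_forall fun z => ?_, fun p q hpq hqp => ?_⟩
  · simp only [ofPred_and, ofPred_forall]
    exact (isOpen_lt continuous_const (hw p)).inter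
      (isOpen_iInter_of_finite fun q => isOpen_iInter_of_finite fun _ => isOpen_lt (hw q) (hw p))
  · obtain ⟨hu0, hv0⟩ := mul_ne_zero_iff.1 hz.1.ne'
    exact ⟨hu p.1 (subset_tsupport _ hu0), hv p.2 (subset_tsupport _ hv0)⟩
  · obtain ⟨p, hp⟩ := exists_mul_max_of_not_le (u.nonneg · z) (v.nonneg · z)
      (u.exists_pos (mem_univ z)) (v.exists_pos (mem_univ z))
    exact mem_iUnion.2 ⟨p, hp⟩
  · refine disjoint_left.2 fun z hzp hzq => ?_
    exact (hzp.2 q hqp).asymm (hzq.2 p hpq)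

theorem genusLE_prodMap {X Y X' Y' : Type*} [TopologicalSpace X] [TopologicalSpace Y]
    [TopologicalSpace X'] [TopologicalSpace Y'] [NormalSpace (Y × Y')]
    {f : C(X, Y)} {f' : C(X', Y')} {n m : ℕ} (hf : genusLE f n) (hf' : genusLE f' m) :
    genusLE (f.prodMap f') (n + m) := by
  obtain ⟨U, hUo, hUc, hU⟩ := hf
  obtain ⟨V, hVo, hVc, hV⟩ := hf'
  obtain ⟨Ω, hΩo, hΩUV, hΩc, hΩd⟩ := exists_inter_refinement_disjoint_of_incomparable
    (A := fun i => Prod.fst ⁻¹' U i) (B := fun j => Prod.snd ⁻¹' V j)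
    (fun i => (hUo i).preimage continuous_fst) (by rw [← preimage_iUnion, hUc, preimage_univ])
    (fun j => (hVo j).preimage continuous_snd) (by rw [← preimage_iUnion, hVc, preimage_univ])
  let level (k : Fin (n + m + 1)) := {p : Fin (n + 1) × Fin (m + 1) // (p.1 : ℕ) + p.2 = k}
  refine ⟨fun k => ⋃ p : level k, Ω p, fun k => isOpen_iUnion fun p => hΩo p, ?_, fun k => ?_⟩
  · refine eq_univ_of_forall fun z => ?_
    obtain ⟨p, hp⟩ := mem_iUnion.1 (hΩc ▸ mem_univ z)
    exact mem_iUnion.2 ⟨⟨p.1 + p.2, by omega⟩, mem_iUnion.2 ⟨⟨p, rfl⟩, hp⟩⟩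
  · have eq_of_le : ∀ p q : Fin (n + 1) × Fin (m + 1), (p.1 : ℕ) + p.2 = q.1 + q.2 → p ≤ q →
        p = q := by
      rintro ⟨a, b⟩ ⟨c, d⟩ hsum ⟨hac, hbd⟩
      simp only [Fin.le_def] at hsum hac hbd
      simp only [Prod.mk.injEq, Fin.ext_iff]
      omega
    have hdisj : Pairwise (Disjoint on fun p : level k => Ω p) := fun p q hpq =>
      hΩd p q (fun hle => hpq (Subtype.ext (eq_of_le _ _ (p.2.trans q.2.symm) hle)))
        (fun hle => hpq (Subtype.ext (eq_of_le _ _ (q.2.trans p.2.symm) hle).symm))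
    exact HasHomotopySectionOn.iUnion (fun p => hΩo p) hdisj fun p =>
      (HasHomotopySectionOn.prodMap (hU _) (hV _)).mono (hΩUV p)

theorem sInf_natCast_image_le_add {R S T : Set ℕ} (h : ∀ n ∈ S, ∀ m ∈ T, n + m ∈ R) :
    sInf ((fun k : ℕ => (k : ℕ∞)) '' R) ≤
      sInf ((fun k : ℕ => (k : ℕ∞)) '' S) + sInf ((fun k : ℕ => (k : ℕ∞)) '' T) := by
  rcases S.eq_empty_or_nonempty with rfl | hS
  · simp
  rcases T.eq_empty_or_nonempty with rfl | hT
  · simp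
  rw [sInf_image (s := S), sInf_image (s := T), ← ENat.natCast_sInf hS, ← ENat.natCast_sInf hT,
    ← Nat.cast_add]
  exact sInf_le (mem_image_of_mem _ (h _ (Nat.sInf_mem hS) _ (Nat.sInf_mem hT)))

theorem genus_prodMap_le_general {X Y X' Y' : Type*} [TopologicalSpace X] [TopologicalSpace Y]
    [TopologicalSpace X'] [TopologicalSpace Y'] [NormalSpace (Y × Y')]
    (f : C(X, Y)) (f' : C(X', Y')) :
    schwarzGenus (f.prodMap f') ≤ schwarzGenus f + schwarzGenus f' :=
  sInf_natCast_image_le_add fun _ hn _ hm => genusLE_prodMap hn hm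

/-- Subadditivity of the Schwarz genus for products: if `Y × Y'` is a normal
(Hausdorff) space then `genus(f × f') ≤ genus(f) + genus(f')`. -/
theorem genus_prodMap_le {X Y X' Y' : Type*} [TopologicalSpace X] [TopologicalSpace Y]
    [TopologicalSpace X'] [TopologicalSpace Y'] [NormalSpace (Y × Y')] [T2Space (Y × Y')]
    (f : C(X, Y)) (f' : C(X', Y')) :
    schwarzGenus (f.prodMap f') ≤ schwarzGenus f + schwarzGenus f' :=
  genus_prodMap_le_general f f'
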